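/- arXiv:1603.06731 — 3 statements merged into one kernel-verified Lean document; each statement's English description precedes it below -/
import Mathlib

section
/- Let V be a 4-dimensional complex vector space with a nondegenerate alternating bilinear form σ, and let A ∈ 𝔰𝔭(V,σ) satisfy A ∘ A = 0. Then there exists a Lagrangian subspace U ⊆ V with U ⊆ ker A. -/
/-- Let `V` be a 4-dimensional complex vector space with a nondegenerate
alternating bilinear form `σ`, and let `A ∈ 𝔰𝔭(V,σ)` satisfy `A ∘ A = 0`. Then there exists
a Lagrangian subspace `U ⊆ V` (i.e. `dim U = 2` and `σ` vanishes identically on `U`) with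
`U ⊆ ker A`. -/
theorem exists_lagrangian_in_kernel
    {V : Type*} [AddCommGroup V] [Module ℂ V] [FiniteDimensional ℂ V]
    (hdim : Module.finrank ℂ V = 4)
    (σ : V →ₗ[ℂ] V →ₗ[ℂ] ℂ)
    (halt : ∀ v : V, σ v v = 0)
    (hnd : ∀ v : V, (∀ w : V, σ v w = 0) → v = 0)
    (A : V →ₗ[ℂ] V)
    (hA : ∀ v w : V, σ (A v) w + σ v (A w) = 0)
    (hA2 : A ∘ₗ A = 0) :
    ∃ U : Submodule ℂ V,
      Module.finrank ℂ U = 2 ∧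
      (∀ u ∈ U, ∀ u' ∈ U, σ u u' = 0) ∧
      U ≤ LinearMap.ker A := by
  have hanti : ∀ v w : V, σ w v = -σ v w := by
    intro v w
    have h := halt (v + w)
    simp only [map_add, LinearMap.add_apply, halt] at h
    linear_combination h
  set K := LinearMap.ker A with hKdef
  have hσAv : ∀ v w : V, w ∈ K → σ (A v) w = 0 := by
    intro v w hw
    have h := hA v w
    rw [LinearMap.mem_ker.mp hw, map_zero] at h
    linear_combination h
  suffices h : ∃ u w : V, u ∈ K ∧ w ∈ K ∧ u ≠ 0 ∧ w ∉ Submodule.span ℂ {u} ∧ σ u w = 0 by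
    obtain ⟨u, w, huK, hwK, hu0, hws, hσuw⟩ := h
    have hli : LinearIndependent ℂ ![w, u] := by
      rw [linearIndependent_fin2]
      refine ⟨by simpa using hu0, fun a ha => hws ?_⟩
      simp only [Matrix.cons_val_one, Matrix.head_cons, Matrix.cons_val_zero] at ha
      rw [← ha]
      exact Submodule.smul_mem _ _ (Submodule.mem_span_singleton_self u)
    refine ⟨Submodule.span ℂ {w, u}, ?_, ?_, ?_⟩
    · have : Set.range ![w, u] = {w, u} := by
        simp [Matrix.range_cons, Matrix.range_empty, Set.singleton_union]
        exact Set.pair_comm u w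
      rw [← this, finrank_span_eq_card hli]
      simp
    · intro x hx y hy
      obtain ⟨a, b, rfl⟩ := Submodule.mem_span_pair.mp hx
      obtain ⟨c, d, rfl⟩ := Submodule.mem_span_pair.mp hy
      have h1 : σ w u = -σ u w := hanti u w
      simp only [map_add, map_smul, LinearMap.add_apply, LinearMap.smul_apply, smul_eq_mul,
        halt, h1, hσuw]
      ring
    · rw [Submodule.span_le, Set.insert_subset_iff, Set.singleton_subset_iff]
      exact ⟨hwK, huK⟩
  have hrn := LinearMap.finrank_range_add_finrank_ker A
  rw [hdim, ← hKdef] at hrn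
  by_cases hA0 : A = 0
  · -- K = ⊤
    have hK : K = ⊤ := by simp [hKdef, hA0]
    have : Nontrivial V := Module.nontrivial_of_finrank_pos (by omega : 0 < Module.finrank ℂ V)
    obtain ⟨u, hu0⟩ := exists_ne (0 : V)
    have hrange : Module.finrank ℂ (LinearMap.range (σ u)) ≤ 1 := by
      have := Submodule.finrank_le (LinearMap.range (σ u))
      simpa using this
    have hWrank : 3 ≤ Module.finrank ℂ (LinearMap.ker (σ u)) := by
      have := LinearMap.finrank_range_add_finrank_ker (σ u)
      rw [hdim] at this
      omega
    have hnotle : ¬ LinearMap.ker (σ u) ≤ Submodule.span ℂ {u} := by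
      intro hle
      have := Submodule.finrank_mono hle
      rw [finrank_span_singleton hu0] at this
      omega
    obtain ⟨w, hwW, hws⟩ := Set.not_subset.mp fun h => hnotle h
    exact ⟨u, w, hK ▸ Submodule.mem_top, hK ▸ Submodule.mem_top, hu0, hws,
      LinearMap.mem_ker.mp hwW⟩
  · -- A ≠ 0: take u = A v ≠ 0
    obtain ⟨v, hv⟩ : ∃ v, A v ≠ 0 := by
      by_contra h
      push_neg at h
      exact hA0 (LinearMap.ext fun x => h x)
    have huK : A v ∈ K := by
      rw [hKdef, LinearMap.mem_ker, ← LinearMap.comp_apply, hA2, LinearMap.zero_apply]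
    have hK2 : 2 ≤ Module.finrank ℂ K := by
      have hle : LinearMap.range A ≤ K := by
        rintro _ ⟨x, rfl⟩
        rw [hKdef, LinearMap.mem_ker, ← LinearMap.comp_apply, hA2, LinearMap.zero_apply]
      have := Submodule.finrank_mono hle
      omega
    have hnotle : ¬ (K : Set V) ⊆ (Submodule.span ℂ {A v} : Set V) := by
      intro hle
      have := Submodule.finrank_mono (show K ≤ Submodule.span ℂ {A v} from hle)
      rw [finrank_span_singleton hv] at this
      omega
    obtain ⟨w, hwK, hws⟩ := Set.not_subset.mp hnotle
    exact ⟨A v, w, huK, hwK, hv, hws, hσAv v w hwK⟩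
end

section
/- Let V be a 4-dimensional complex vector space with a nondegenerate alternating bilinear form σ. For every A ∈ 𝔰𝔭(V,σ) with A ∘ A = 0 there exist v, w ∈ V with σ(v,w) = 0 and A = ε(v ⊗ w), i.e. A(x) = σ(v,x)·w + σ(w,x)·v for all x ∈ V. In other words, the map ε : W → Z is surjective, where Z = {A ∈ 𝔰𝔭(V,σ) : A² = 0}. -/
/-- The endomorphism `ε(v ⊗ w) : x ↦ σ(v,x)·w + σ(w,x)·v` of `V`, for `v w : V`. -/
def eps {V : Type*} [AddCommGroup V] [Module ℂ V]
    (σ : V →ₗ[ℂ] V →ₗ[ℂ] ℂ) (v w : V) : V →ₗ[ℂ] V :=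
  (σ v).smulRight w + (σ w).smulRight v

/-!
Since `A² = 0`, the range of `A` lies in its kernel, so in dimension `4` the rank of `A` is at
most `2` and its range lies in the span of two independent vectors `u₀, u₁`. Picking `z₀, z₁`
with `σ(zᵢ, uⱼ) = δᵢⱼ` and using that `(x, y) ↦ σ(x, A y)` is symmetric for `A ∈ 𝔰𝔭(V, σ)`,
one gets `A y = ∑ Qᵢⱼ σ(y, uⱼ) uᵢ` with `Q` a symmetric `2 × 2` matrix. Over `ℂ`,
`-Q = p qᵀ + q pᵀ` for some `p, q ∈ ℂ²`, which is exactly `A = ε(v ⊗ w)` for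
`v = p₀u₀ + p₁u₁`, `w = q₀u₀ + q₁u₁`. Finally `A (A v) = σ(w, v)² v`, so `A² = 0` forces
`σ(v, w) = 0`.
-/

open Module Submodule

lemma exists_linearIndependent_fin_le_span {K V : Type*} [Field K] [AddCommGroup V] [Module K V]
    [FiniteDimensional K V] (p : Submodule K V) {n : ℕ} (hp : finrank K p ≤ n)
    (hn : n ≤ finrank K V) :
    ∃ u : Fin n → V, LinearIndependent K u ∧ p ≤ span K (Set.range u) := by
  induction n, hp using Nat.le_induction with
  | base =>
    let b := finBasis K p
    refine ⟨p.subtype ∘ b, b.linearIndependent.map' _ p.ker_subtype, ?_⟩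
    rw [Set.range_comp, ← map_span, b.span_eq, Submodule.map_top, range_subtype]
  | succ n _ ih =>
    obtain ⟨u, hu, hpu⟩ := ih (by omega)
    obtain ⟨x, hx⟩ := exists_linearIndependent_cons_of_lt_finrank hu (by omega)
    refine ⟨Fin.cons x u, hx, hpu.trans (span_mono ?_)⟩
    rw [Fin.range_cons]
    exact Set.subset_insert _ _

lemma exists_eq_symmetrized_product {K : Type*} [Field K] [IsAlgClosed K] (h2 : (2 : K) ≠ 0)
    (a b c : K) : ∃ α β γ δ : K, 2 * α * γ = a ∧ α * δ + β * γ = b ∧ 2 * β * δ = c := by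
  by_cases ha : a = 0
  · exact ⟨0, 1, b, c / 2, by simp [ha], by ring, by field_simp⟩
  · -- `e` is a square root of the discriminant of `a X² + 2 b X Y + c Y²`
    obtain ⟨e, he⟩ := IsAlgClosed.exists_pow_nat_eq (b ^ 2 - a * c) two_pos
    refine ⟨1, (b + e) / a, a / 2, (b - e) / 2, by field_simp, by field_simp; ring, ?_⟩
    field_simp
    linear_combination -he

lemma two_mul_finrank_range_le_of_comp_self_eq_zero {K V : Type*} [Field K] [AddCommGroup V]
    [Module K V] [FiniteDimensional K V] {A : V →ₗ[K] V} (hA : A ∘ₗ A = 0) :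
    2 * finrank K (LinearMap.range A) ≤ finrank K V := by
  have hle : LinearMap.range A ≤ LinearMap.ker A := LinearMap.range_le_ker_iff.2 hA
  have := LinearMap.finrank_range_add_finrank_ker A
  have := Submodule.finrank_mono hle
  omega

lemma LinearMap.SeparatingRight.exists_forall_apply_eq {K M N ι : Type*} [Field K]
    [AddCommGroup M] [Module K M] [AddCommGroup N] [Module K N] [Fintype ι]
    {B : M →ₗ[K] N →ₗ[K] K} (hB : B.SeparatingRight) {u : ι → N} (hu : LinearIndependent K u)
    (c : ι → K) : ∃ z : M, ∀ i, B z (u i) = c i := by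
  have hli : LinearIndependent K fun i z => B z (u i) := by
    refine Fintype.linearIndependent_iff.2 fun g hg => Fintype.linearIndependent_iff.1 hu g ?_
    refine hB _ fun z => ?_
    simpa [map_sum] using congrFun hg z
  have hspan := span_flip_eq_top_iff_linearIndependent.2 hli
  have hrange : Set.range (_root_.flip fun i z => B z (u i)) =
      (LinearMap.range (LinearMap.pi fun i => B.flip (u i)) : Set (ι → K)) := by
    rw [LinearMap.coe_range]; rfl
  rw [hrange, span_eq, LinearMap.range_eq_top] at hspan
  obtain ⟨z, hz⟩ := hspan c
  exact ⟨z, congrFun hz⟩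

lemma exists_apply_eq_of_range_le_span {K V : Type*} [Field K] [AddCommGroup V] [Module K V]
    {σ : V →ₗ[K] V →ₗ[K] K} (hσ : σ.IsAlt) (hsep : σ.SeparatingRight) {A : V →ₗ[K] V}
    (hA : ∀ v w : V, σ (A v) w + σ v (A w) = 0) {u : Fin 2 → V} (hu : LinearIndependent K u)
    (hrange : LinearMap.range A ≤ span K (Set.range u)) :
    ∃ a b c : K, ∀ y, A y =
      (a * σ y (u 0) + b * σ y (u 1)) • u 0 + (b * σ y (u 0) + c * σ y (u 1)) • u 1 := by
  obtain ⟨z₀, hz₀⟩ := hsep.exists_forall_apply_eq hu ![1, 0]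
  obtain ⟨z₁, hz₁⟩ := hsep.exists_forall_apply_eq hu ![0, 1]
  have hsymm : ∀ x y, σ x (A y) = σ y (A x) := fun x y => by
    linear_combination hA x y + hσ.neg (A x) y
  have hcoord : ∀ y, A y = σ z₀ (A y) • u 0 + σ z₁ (A y) • u 1 := fun y => by
    obtain ⟨c, hc⟩ := (mem_span_range_iff_exists_fun K).1 (hrange (LinearMap.mem_range_self A y))
    rw [← hc, Fin.sum_univ_two]
    simp [hz₀, hz₁]
  have hexpand : ∀ x y, σ y (A x) = σ z₀ (A x) * σ y (u 0) + σ z₁ (A x) * σ y (u 1) :=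
    fun x y => by
      conv_lhs => rw [hcoord x]
      simp
  refine ⟨σ z₀ (A z₀), σ z₀ (A z₁), σ z₁ (A z₁), fun y => ?_⟩
  rw [hcoord y, hsymm z₀ y, hsymm z₁ y, hexpand z₀ y, hexpand z₁ y, hsymm z₁ z₀]

section

variable {V : Type*} [AddCommGroup V] [Module ℂ V] {σ : V →ₗ[ℂ] V →ₗ[ℂ] ℂ}

lemma eps_apply (v w x : V) : eps σ v w x = σ v x • w + σ w x • v := rfl

lemma exists_eq_eps_of_apply_eq (hσ : σ.IsAlt) {A : V →ₗ[ℂ] V} {u₀ u₁ : V} {a b c : ℂ}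
    (hA : ∀ y, A y = (a * σ y u₀ + b * σ y u₁) • u₀ + (b * σ y u₀ + c * σ y u₁) • u₁) :
    ∃ v w, A = eps σ v w := by
  obtain ⟨α, β, γ, δ, ha, hb, hc⟩ := exists_eq_symmetrized_product two_ne_zero (-a) (-b) (-c)
  refine ⟨α • u₀ + β • u₁, γ • u₀ + δ • u₁, LinearMap.ext fun y => ?_⟩
  simp only [eps_apply, hA, map_add, map_smul, LinearMap.add_apply, LinearMap.smul_apply,
    smul_eq_mul, ← hσ.neg y u₀, ← hσ.neg y u₁]
  linear_combination (norm := module)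
    ha • σ y u₀ • u₀ + hb • (σ y u₁ • u₀ + σ y u₀ • u₁) + hc • σ y u₁ • u₁

lemma apply_eq_zero_of_eps_comp_self_eq_zero (hσ : σ.IsAlt) {v w : V}
    (h : eps σ v w ∘ₗ eps σ v w = 0) : σ v w = 0 := by
  have hv : eps σ v w v = σ w v • v := by simp [eps_apply, hσ v]
  have hsq : σ w v ^ 2 • v = 0 := by
    simpa [hv, smul_smul, ← sq] using LinearMap.congr_fun h v
  rcases smul_eq_zero.1 hsq with hwv | rfl
  · rw [← hσ.neg, pow_eq_zero_iff two_ne_zero |>.1 hwv, neg_zero]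
  · simp

end

/-- Let `V` be a 4-dimensional complex vector space with a nondegenerate
alternating bilinear form `σ`. For every `A ∈ 𝔰𝔭(V,σ)` with `A ∘ A = 0` there exist
`v, w ∈ V` with `σ(v,w) = 0` and `A = ε(v ⊗ w)`, i.e. `A x = σ(v,x)·w + σ(w,x)·v` for all
`x ∈ V`.  In other words, the map `ε : W → Z` is surjective, where
`Z = {A ∈ 𝔰𝔭(V,σ) : A² = 0}`. -/
theorem eps_surjective_onto_square_zero
    {V : Type*} [AddCommGroup V] [Module ℂ V] [FiniteDimensional ℂ V]
    (hdim : Module.finrank ℂ V = 4)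
    (σ : V →ₗ[ℂ] V →ₗ[ℂ] ℂ)
    (halt : ∀ v : V, σ v v = 0)
    (hnd : ∀ v : V, (∀ w : V, σ v w = 0) → v = 0)
    (A : V →ₗ[ℂ] V)
    (hA : ∀ v w : V, σ (A v) w + σ v (A w) = 0)
    (hA2 : A ∘ₗ A = 0) :
    ∃ v w : V, σ v w = 0 ∧ A = eps σ v w := by
  have hσ : σ.IsAlt := halt
  have hsep : σ.SeparatingRight := (hσ.isRefl.nondegenerate_iff_separatingLeft.2 hnd).2
  have hrank := two_mul_finrank_range_le_of_comp_self_eq_zero hA2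
  obtain ⟨u, hu, hrange⟩ :=
    exists_linearIndependent_fin_le_span (LinearMap.range A) (n := 2) (by omega) (by omega)
  obtain ⟨a, b, c, hAabc⟩ := exists_apply_eq_of_range_le_span hσ hsep hA hu hrange
  obtain ⟨v, w, rfl⟩ := exists_eq_eps_of_apply_eq hσ hAabc
  exact ⟨v, w, apply_eq_zero_of_eps_comp_self_eq_zero hσ hA2, rfl⟩
end

section
/- Let V be a 4-dimensional complex vector space with a nondegenerate alternating bilinear form σ, and let A ∈ 𝔰𝔭(V,σ) with A ∘ A = 0. Then rank A ≤ 1 if and only if there exists v ∈ V such that A(x) = σ(v,x)·v for all x ∈ V. Moreover, if v, v' ∈ V satisfy σ(v,x)·v = σ(v',x)·v' for all x ∈ V, then v ⊗ v = v' ⊗ v' (equivalently v' = v or v' = −v); in particular, the element v is unique up to sign. -/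
open TensorProduct

/-- Let `V` be a 4-dimensional complex vector space with a nondegenerate
alternating bilinear form `σ`, and let `A ∈ 𝔰𝔭(V,σ)` with `A ∘ A = 0`. Then `rank A ≤ 1`
if and only if there exists `v ∈ V` such that `A x = σ(v,x)·v` for all `x ∈ V`. Moreover,
if `v, v' ∈ V` satisfy `σ(v,x)·v = σ(v',x)·v'` for all `x ∈ V`, then `v ⊗ v = v' ⊗ v'`
(equivalently `v' = v` or `v' = −v`); in particular the element `v` is unique up to sign. -/
theorem rank_le_one_iff_eps_diag
    {V : Type*} [AddCommGroup V] [Module ℂ V] [FiniteDimensional ℂ V]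
    (hdim : Module.finrank ℂ V = 4)
    (σ : V →ₗ[ℂ] V →ₗ[ℂ] ℂ)
    (halt : ∀ v : V, σ v v = 0)
    (hnd : ∀ v : V, (∀ w : V, σ v w = 0) → v = 0)
    (A : V →ₗ[ℂ] V)
    (hA : ∀ v w : V, σ (A v) w + σ v (A w) = 0)
    (hA2 : A ∘ₗ A = 0) :
    (Module.finrank ℂ (LinearMap.range A) ≤ 1 ↔
      ∃ v : V, ∀ x : V, A x = σ v x • v) ∧
    (∀ v v' : V, (∀ x : V, σ v x • v = σ v' x • v') →
      v ⊗ₜ[ℂ] v = v' ⊗ₜ[ℂ] v' ∧ (v' = v ∨ v' = -v)) := by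
  -- skew-symmetry
  have skew : ∀ x y : V, σ x y = -σ y x := by
    intro x y
    have h := halt (x + y)
    simp only [map_add, LinearMap.add_apply, halt] at h
    linear_combination h
  -- nondegeneracy: nonzero vectors pair nontrivially
  have pair : ∀ v : V, v ≠ 0 → ∃ x : V, σ v x ≠ 0 := by
    intro v hv
    by_contra hc
    push_neg at hc
    exact hv (hnd v hc)
  constructor
  · constructor
    · -- forward direction
      intro hrank
      obtain ⟨v₀, hv₀⟩ := (finrank_le_one_iff).1 hrank
      set u : V := (v₀ : V) with hu_def
      have hspan : ∀ x : V, ∃ c : ℂ, A x = c • u := by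
        intro x
        obtain ⟨c, hc⟩ := hv₀ ⟨A x, LinearMap.mem_range_self A x⟩
        exact ⟨c, by simpa [hu_def] using congrArg (Subtype.val) hc.symm⟩
      by_cases hu : u = 0
      · refine ⟨0, fun x => ?_⟩
        obtain ⟨c, hc⟩ := hspan x
        simp [hc, hu]
      · obtain ⟨y₀, hy₀⟩ := pair u hu
        obtain ⟨c₀, hc₀⟩ := hspan y₀
        obtain ⟨s, hs⟩ := IsAlgClosed.exists_pow_nat_eq (c₀ / σ u y₀) (n := 2) (by norm_num)
        refine ⟨s • u, fun x => ?_⟩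
        obtain ⟨cx, hcx⟩ := hspan x
        have key := hA x y₀
        rw [hcx, hc₀] at key
        simp only [map_smul, LinearMap.smul_apply, smul_eq_mul] at key
        -- key : cx * σ u y₀ + c₀ * σ x u = 0
        have hxu : σ x u = -σ u x := skew x u
        have key2 : cx * σ u y₀ = c₀ * σ u x := by
          rw [hxu] at key
          linear_combination key
        have hcx_val : cx = (c₀ / σ u y₀) * σ u x := by
          field_simp
          linear_combination key2
        rw [hcx, hcx_val]
        rw [map_smul, LinearMap.smul_apply, smul_eq_mul, smul_smul]
        congr 1
        have hss : s * s = c₀ / σ u y₀ := by linear_combination hs - sq s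
        linear_combination (-(σ u x)) * hss
    · -- reverse direction
      rintro ⟨v, hv⟩
      have hle : LinearMap.range A ≤ Submodule.span ℂ {v} := by
        rintro _ ⟨x, rfl⟩
        rw [hv]
        exact Submodule.smul_mem _ _ (Submodule.mem_span_singleton_self v)
      refine le_trans (Submodule.finrank_mono hle) ?_
      by_cases hv0 : v = 0
      · rw [hv0, Submodule.span_zero_singleton]
        simp
      · rw [finrank_span_singleton hv0]
  · -- uniqueness up to sign
    intro v v' h
    have hsign : v' = v ∨ v' = -v := by
      by_cases hv : v = 0
      · subst hv
        left
        apply hnd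
        intro w
        have h0 : σ v' w • v' = 0 := by simpa using (h w).symm
        rcases smul_eq_zero.mp h0 with h1 | h2
        · exact h1
        · simp [h2]
      · obtain ⟨x, hx⟩ := pair v hv
        have hx' := h x
        have hv' : v' ≠ 0 := by
          rintro rfl
          simp only [smul_zero] at hx'
          rcases smul_eq_zero.mp hx' with h1 | h2
          · exact hx h1
          · exact hv h2
        have hσv' : σ v' x ≠ 0 := by
          intro h0
          rw [h0, zero_smul] at hx'
          rcases smul_eq_zero.mp hx' with h1 | h2
          · exact hx h1
          · exact hv h2
        set c : ℂ := σ v x / σ v' x with hc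
        have hveq : v' = c • v := by
          apply smul_right_injective V hσv'
          show σ v' x • v' = σ v' x • (c • v)
          rw [smul_smul]
          have hmul : σ v' x * c = σ v x := by
            rw [hc]
            field_simp
          rw [hmul]
          exact hx'.symm
        have hc2 : c ^ 2 = 1 := by
          have h2 := h x
          rw [hveq] at h2
          simp only [map_smul, LinearMap.smul_apply, smul_eq_mul, smul_smul] at h2
          -- h2 : σ v x • v = (c * σ v x * c) • v
          have : (σ v x - c * σ v x * c) • v = 0 := by
            rw [sub_smul, h2, sub_self]
          rcases smul_eq_zero.mp this with h1 | h2'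
          · have : σ v x * (1 - c ^ 2) = 0 := by linear_combination h1
            rcases mul_eq_zero.mp this with h3 | h3
            · exact absurd h3 hx
            · linear_combination -h3
          · exact absurd h2' hv
        have : (c - 1) * (c + 1) = 0 := by linear_combination hc2
        rcases mul_eq_zero.mp this with h1 | h1
        · left
          rw [hveq, sub_eq_zero.mp h1, one_smul]
        · right
          have : c = -1 := by linear_combination h1
          rw [hveq, this, neg_one_smul]
    refine ⟨?_, hsign⟩
    rcases hsign with rfl | rfl
    · rfl
    · simp [TensorProduct.neg_tmul, TensorProduct.tmul_neg]
end
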